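/- Let Ω ⊆ ℝ^q be open, δ ∈ (0,1), and let a_j : Ω → End(ℂ^{M_j}) (j = 1,2) be smooth and admit δ-admissible decompositions on Ω. Let p : Ω×ℝ^q → Hom(ℂ^{M₁},ℂ^{M₂}) be smooth and twisted homogeneous of degree μ in the large, i.e., for every compact K ⊆ Ω there exists R > 0 such that p(y,ϱη) = ϱ^μ · ϱ^{−a₂(y)} p(y,η) ϱ^{a₁(y)} for all y ∈ K, |η| ≥ R, and ϱ ≥ 1. If p ∈ S^{μ−ε}_{1,δ}(Ω×ℝ^q;(ℂ^{M₁},a₁),(ℂ^{M₂},a₂)) for some ε > 0, then p vanishes for large |η| locally uniformly: for every compact K ⊆ Ω there exists R' > 0 such that p(y,η) = 0 for all y ∈ K and |η| ≥ R'. -/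

import Mathlib

open Set Metric
noncomputable section

abbrev Vec (q : ℕ) := EuclideanSpace ℝ (Fin q)
abbrev CVec (M : ℕ) := EuclideanSpace ℂ (Fin M)
abbrev Hom' (M₁ M₂ : ℕ) := CVec M₁ →L[ℂ] CVec M₂
abbrev End' (M : ℕ) := Hom' M M

/-- `ϱ^a := exp((log ϱ)·a)`. -/
def rpowEnd {M : ℕ} (ϱ : ℝ) (a : End' M) : End' M :=
  NormedSpace.exp ((Real.log ϱ : ℂ) • a)

/-- `⟨η⟩ = (1+|η|²)^{1/2}`. -/
def jbr {q : ℕ} (η : Vec q) : ℝ := Real.sqrt (1 + ‖η‖ ^ 2)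

/-- Iterated partial derivatives in the second (covariable) slot. -/
def pdSnd {q : ℕ} {F : Type*} [NormedAddCommGroup F] [NormedSpace ℝ F]
    (β : List (Fin q)) (f : Vec q → Vec q → F) : Vec q → Vec q → F :=
  β.foldr (fun i g => fun y η => fderiv ℝ (g y) η (EuclideanSpace.single i (1:ℝ))) f

/-- Iterated partial derivatives in the first (base variable) slot. -/
def pdFst {q : ℕ} {F : Type*} [NormedAddCommGroup F] [NormedSpace ℝ F]
    (α : List (Fin q)) (f : Vec q → Vec q → F) : Vec q → Vec q → F :=
  α.foldr (fun i g => fun y η => fderiv ℝ (fun y' => g y' η) y (EuclideanSpace.single i (1:ℝ))) f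

/-- The twisted symbol class `S^μ_{1,δ}(Ω×ℝ^q;(ℂ^{M₁},a₁),(ℂ^{M₂},a₂))`. -/
def TwistedSymbol {q M₁ M₂ : ℕ} (Ω : Set (Vec q)) (δ μ : ℝ)
    (a₁ : Vec q → End' M₁) (a₂ : Vec q → End' M₂)
    (p : Vec q → Vec q → Hom' M₁ M₂) : Prop :=
  ContDiffOn ℝ (⊤ : ℕ∞) (fun z : Vec q × Vec q => p z.1 z.2) (Ω ×ˢ (univ : Set (Vec q))) ∧
  ∀ K : Set (Vec q), K ⊆ Ω → IsCompact K → ∀ α β : List (Fin q),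
    ∃ C > 0, ∀ y ∈ K, ∀ η : Vec q,
      ‖(rpowEnd (jbr η) (a₂ y)).comp
          ((pdFst α (pdSnd β p) y η).comp (rpowEnd (jbr η) (-(a₁ y))))‖
        ≤ C * jbr η ^ (μ - (β.length : ℝ) + δ * (α.length : ℝ))

/-- Spectrum of the restriction of `f` to an invariant subspace `V`. -/
def specRes {M : ℕ} (f : End' M) (V : Submodule ℂ (CVec M))
    (h : ∀ x ∈ V, f x ∈ V) : Set ℂ :=
  spectrum ℂ ((f : CVec M →ₗ[ℂ] CVec M).restrict h)

/-- `a` admits a `δ`-admissible decomposition on `Ω`. -/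
def AdmissibleDecomp {q M : ℕ} (Ω : Set (Vec q)) (δ : ℝ)
    (a : Vec q → End' M) : Prop :=
  ∃ (N : ℕ) (V : Fin N → Submodule ℂ (CVec M)),
    DirectSum.IsInternal V ∧
    ∃ hinv : ∀ k, ∀ y ∈ Ω, ∀ x ∈ V k, a y x ∈ V k,
      (∀ k, Metric.diam
          (closure (⋃ y, ⋃ hy : y ∈ Ω, specRes (a y) (V k) (hinv k y hy))) < δ) ∧
      Pairwise (fun k l => Disjoint
          (closure (⋃ y, ⋃ hy : y ∈ Ω, specRes (a y) (V k) (hinv k y hy)))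
          (closure (⋃ y, ⋃ hy : y ∈ Ω, specRes (a y) (V l) (hinv l y hy))))

/-- `p` is twisted homogeneous of degree `μ` in the large with respect to the
actions generated by `a₁` (domain) and `a₂` (range). -/
def TwistedHomogLarge {q M₁ M₂ : ℕ} (Ω : Set (Vec q)) (μ : ℝ)
    (a₁ : Vec q → End' M₁) (a₂ : Vec q → End' M₂)
    (p : Vec q → Vec q → Hom' M₁ M₂) : Prop :=
  ∀ K : Set (Vec q), K ⊆ Ω → IsCompact K → ∃ R > (0:ℝ), ∀ y ∈ K, ∀ η : Vec q,
    R ≤ ‖η‖ → ∀ ϱ : ℝ, 1 ≤ ϱ →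
      p y (ϱ • η) = ((ϱ ^ μ : ℝ) : ℂ) •
        ((rpowEnd ϱ (-(a₂ y))).comp ((p y η).comp (rpowEnd ϱ (a₁ y))))

/-! ### Auxiliary lemmas -/

lemma aux_norm_exp_le {M : ℕ} (x : End' M) :
    ‖NormedSpace.exp x‖ ≤ Real.exp ‖x‖ := by
  rw [NormedSpace.exp_eq_tsum ℂ]
  have hsum := NormedSpace.norm_expSeries_summable' (𝕂 := ℂ) x
  have hsum2 : Summable fun n : ℕ => ‖x‖ ^ n / (n.factorial : ℝ) :=
    Real.summable_pow_div_factorial ‖x‖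
  have h1 : ∀ n : ℕ, ‖((n.factorial : ℂ))⁻¹ • x ^ n‖ ≤ ‖x‖ ^ n / (n.factorial : ℝ) := by
    intro n
    have e1 : ‖((n.factorial : ℂ))⁻¹ • x ^ n‖ ≤ ‖((n.factorial : ℂ))⁻¹‖ * ‖x ^ n‖ :=
      ContinuousLinearMap.opNorm_smul_le _ _
    have e2 : ‖((n.factorial : ℂ))⁻¹‖ = ((n.factorial : ℝ))⁻¹ := by
      rw [norm_inv, Complex.norm_natCast]
    have hx : ‖x ^ n‖ ≤ ‖x‖ ^ n := by
      cases n with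
      | zero =>
        calc ‖x ^ 0‖ = ‖ContinuousLinearMap.id ℂ (CVec M)‖ := by
              rw [pow_zero, ContinuousLinearMap.one_def]
          _ ≤ 1 := ContinuousLinearMap.norm_id_le
          _ = ‖x‖ ^ 0 := (pow_zero _).symm
      | succ m => exact norm_pow_le' x (Nat.succ_pos m)
    refine e1.trans ?_
    rw [e2, div_eq_inv_mul]
    gcongr
  calc ‖∑' n : ℕ, ((n.factorial : ℂ))⁻¹ • x ^ n‖
      ≤ ∑' n : ℕ, ‖((n.factorial : ℂ))⁻¹ • x ^ n‖ := norm_tsum_le_tsum_norm hsum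
    _ ≤ ∑' n : ℕ, ‖x‖ ^ n / (n.factorial : ℝ) := Summable.tsum_le_tsum h1 hsum hsum2
    _ = Real.exp ‖x‖ := by rw [Real.exp_eq_exp_ℝ, NormedSpace.exp_eq_tsum_div]

lemma aux_rpowEnd_comp_neg {M : ℕ} (a : End' M) (s t : ℝ) :
    (rpowEnd s a).comp (rpowEnd t (-a)) =
      NormedSpace.exp (((Real.log s - Real.log t : ℝ) : ℂ) • a) := by
  have hc : Commute (((Real.log s : ℝ) : ℂ) • a) (((Real.log t : ℝ) : ℂ) • (-a)) := by
    rw [smul_neg]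
    exact (((Commute.refl a).smul_left _).smul_right _).neg_right
  have h : (rpowEnd s a) * (rpowEnd t (-a)) =
      NormedSpace.exp (((Real.log s - Real.log t : ℝ) : ℂ) • a) := by
    rw [rpowEnd, rpowEnd, ← NormedSpace.exp_add_of_commute_of_mem_ball (𝕂 := ℂ) hc
      (by simp [NormedSpace.expSeries_radius_eq_top]) (by simp [NormedSpace.expSeries_radius_eq_top])]
    congr 1
    push_cast
    module
  exact h

lemma aux_norm_rpowEnd_comp_neg {M : ℕ} (a : End' M) (s t : ℝ) :
    ‖(rpowEnd s a).comp (rpowEnd t (-a))‖ ≤ Real.exp (|Real.log s - Real.log t| * ‖a‖) := by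
  rw [aux_rpowEnd_comp_neg]
  refine (aux_norm_exp_le _).trans (Real.exp_le_exp.mpr ?_)
  refine (ContinuousLinearMap.opNorm_smul_le _ _).trans (le_of_eq ?_)
  rw [Complex.norm_real, Real.norm_eq_abs]

lemma aux_rpowEnd_cancel {M : ℕ} (a : End' M) (t : ℝ) (x : CVec M) :
    rpowEnd t a (rpowEnd t (-a) x) = x := by
  have h := aux_rpowEnd_comp_neg a t t
  rw [sub_self] at h
  have h0 : (((0:ℝ)) : ℂ) • a = (0 : End' M) := by module
  rw [h0, NormedSpace.exp_zero] at h
  have h2 := DFunLike.congr_fun h x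
  simpa using h2

lemma aux_rpowEnd_cancel' {M : ℕ} (a : End' M) (t : ℝ) (x : CVec M) :
    rpowEnd t (-a) (rpowEnd t a x) = x := by
  have := aux_rpowEnd_cancel (-a) t x
  rwa [neg_neg] at this

lemma aux_jbr_pos {q : ℕ} (η : Vec q) : 0 < jbr η := by
  rw [jbr]
  positivity

lemma aux_one_le_jbr {q : ℕ} (η : Vec q) : 1 ≤ jbr η := by
  rw [jbr]
  have h := Real.sqrt_le_sqrt (le_add_of_nonneg_right (sq_nonneg ‖η‖) : (1:ℝ) ≤ 1 + ‖η‖ ^ 2)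
  rwa [Real.sqrt_one] at h

/-- a twisted homogeneous-in-the-large symbol of degree `μ` which lies in
a twisted class of strictly smaller order vanishes for large `|η|`, locally uniformly. -/
theorem statement11 {q M₁ M₂ : ℕ} (Ω : Set (Vec q)) (hΩ : IsOpen Ω)
    (δ : ℝ) (hδ : δ ∈ Set.Ioo (0:ℝ) 1)
    (a₁ : Vec q → End' M₁) (a₂ : Vec q → End' M₂)
    (ha₁ : ContDiffOn ℝ (⊤ : ℕ∞) a₁ Ω) (ha₂ : ContDiffOn ℝ (⊤ : ℕ∞) a₂ Ω)
    (h1 : AdmissibleDecomp Ω δ a₁) (h2 : AdmissibleDecomp Ω δ a₂)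
    (μ : ℝ) (p : Vec q → Vec q → Hom' M₁ M₂)
    (hpsm : ContDiffOn ℝ (⊤ : ℕ∞) (fun z : Vec q × Vec q => p z.1 z.2) (Ω ×ˢ (univ : Set (Vec q))))
    (hhom : TwistedHomogLarge Ω μ a₁ a₂ p)
    (ε : ℝ) (hε : 0 < ε)
    (hp : TwistedSymbol Ω δ (μ - ε) a₁ a₂ p) :
    ∀ K : Set (Vec q), K ⊆ Ω → IsCompact K →
      ∃ R' > (0:ℝ), ∀ y ∈ K, ∀ η : Vec q, R' ≤ ‖η‖ → p y η = 0 := by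
  intro K hK hKc
  obtain ⟨R, hRpos, hhomK⟩ := hhom K hK hKc
  obtain ⟨C, hCpos, hest⟩ := hp.2 K hK hKc [] []
  refine ⟨max R 1, lt_of_lt_of_le one_pos (le_max_right R 1), ?_⟩
  intro y hy η hη
  have hη1 : 1 ≤ ‖η‖ := le_trans (le_max_right R 1) hη
  have hηR : R ≤ ‖η‖ := le_trans (le_max_left R 1) hη
  have hJ1 : 1 ≤ jbr η := aux_one_le_jbr η
  have hJ0 : 0 < jbr η := aux_jbr_pos η
  set J : ℝ := jbr η with hJdef
  set B : ℝ := Real.exp (Real.log J * ‖a₂ y‖) *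
      (C * J ^ |μ - ε| * Real.exp (Real.log J * ‖a₁ y‖)) with hBdef
  have key : ∀ ϱ : ℝ, 1 ≤ ϱ → ‖p y η‖ ≤ B * ϱ ^ (-ε) := by
    intro ϱ hϱ
    have hϱ0 : (0:ℝ) < ϱ := lt_of_lt_of_le one_pos hϱ
    set t : ℝ := jbr (ϱ • η) with htdef
    have ht0 : 0 < t := aux_jbr_pos _
    have hnorm : ‖ϱ • η‖ = ϱ * ‖η‖ := by
      rw [norm_smul, Real.norm_eq_abs, abs_of_pos hϱ0]
    have hη2 : (1:ℝ) ≤ ‖η‖ ^ 2 := one_le_pow₀ hη1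
    have hϱt : ϱ ≤ t := by
      have h1 : ϱ ^ 2 ≤ 1 + ‖ϱ • η‖ ^ 2 := by
        rw [hnorm, mul_pow]
        nlinarith [sq_nonneg ϱ]
      calc ϱ = Real.sqrt (ϱ ^ 2) := (Real.sqrt_sq hϱ0.le).symm
        _ ≤ Real.sqrt (1 + ‖ϱ • η‖ ^ 2) := Real.sqrt_le_sqrt h1
        _ = t := by rw [htdef, jbr]
    have htJ : t ≤ ϱ * J := by
      have hJsq : J ^ 2 = 1 + ‖η‖ ^ 2 := by
        rw [hJdef, jbr, Real.sq_sqrt (by positivity)]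
      have h1 : 1 + ‖ϱ • η‖ ^ 2 ≤ (ϱ * J) ^ 2 := by
        rw [hnorm, mul_pow, mul_pow, hJsq]
        nlinarith [sq_nonneg ϱ, sq_nonneg ‖η‖]
      calc t = Real.sqrt (1 + ‖ϱ • η‖ ^ 2) := by rw [htdef, jbr]
        _ ≤ Real.sqrt ((ϱ * J) ^ 2) := Real.sqrt_le_sqrt h1
        _ = ϱ * J := Real.sqrt_sq (by positivity)
    have hlog1 : 0 ≤ Real.log t - Real.log ϱ :=
      sub_nonneg.mpr (Real.log_le_log hϱ0 hϱt)
    have hlog2 : Real.log t - Real.log ϱ ≤ Real.log J := by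
      have h2 := Real.log_le_log ht0 htJ
      rw [Real.log_mul (ne_of_gt hϱ0) (ne_of_gt hJ0)] at h2
      linarith
    have habs : |Real.log t - Real.log ϱ| ≤ Real.log J := by
      rw [abs_of_nonneg hlog1]; exact hlog2
    have habs' : |Real.log ϱ - Real.log t| ≤ Real.log J := by
      rw [abs_sub_comm]; exact habs
    have h₁ := hhomK y hy η hηR ϱ hϱ
    have hϱμ : (0:ℝ) < ϱ ^ μ := Real.rpow_pos_of_pos hϱ0 μ
    have hid : p y η = ((((ϱ ^ μ : ℝ))⁻¹ : ℝ) : ℂ) •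
        (((rpowEnd ϱ (a₂ y)).comp (rpowEnd t (-(a₂ y)))).comp
          ((((rpowEnd t (a₂ y)).comp ((p y (ϱ • η)).comp (rpowEnd t (-(a₁ y))))).comp
            ((rpowEnd t (a₁ y)).comp (rpowEnd ϱ (-(a₁ y))))))) := by
      refine ContinuousLinearMap.ext fun x => ?_
      simp only [ContinuousLinearMap.smul_apply, ContinuousLinearMap.comp_apply]
      rw [aux_rpowEnd_cancel' (a₂ y) t, aux_rpowEnd_cancel' (a₁ y) t, h₁]
      simp only [ContinuousLinearMap.smul_apply, ContinuousLinearMap.comp_apply, map_smul]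
      rw [aux_rpowEnd_cancel (a₁ y) ϱ, aux_rpowEnd_cancel (a₂ y) ϱ]
      rw [smul_smul, ← Complex.ofReal_mul, inv_mul_cancel₀ (ne_of_gt hϱμ),
        Complex.ofReal_one, one_smul]
    have hQ := hest y hy (ϱ • η)
    simp only [pdFst, pdSnd, List.foldr_nil, List.length_nil, Nat.cast_zero,
      sub_zero, mul_zero, add_zero] at hQ
    have hA : ‖(rpowEnd ϱ (a₂ y)).comp (rpowEnd t (-(a₂ y)))‖ ≤
        Real.exp (Real.log J * ‖a₂ y‖) :=
      (aux_norm_rpowEnd_comp_neg (a₂ y) ϱ t).trans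
        (Real.exp_le_exp.mpr (mul_le_mul_of_nonneg_right habs' (norm_nonneg _)))
    have hB1 : ‖(rpowEnd t (a₁ y)).comp (rpowEnd ϱ (-(a₁ y)))‖ ≤
        Real.exp (Real.log J * ‖a₁ y‖) :=
      (aux_norm_rpowEnd_comp_neg (a₁ y) t ϱ).trans
        (Real.exp_le_exp.mpr (mul_le_mul_of_nonneg_right habs (norm_nonneg _)))
    have hQ' : ‖(rpowEnd t (a₂ y)).comp ((p y (ϱ • η)).comp (rpowEnd t (-(a₁ y))))‖ ≤
        C * t ^ (μ - ε) := hQ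
    have hrt : t ^ (μ - ε) ≤ ϱ ^ (μ - ε) * J ^ |μ - ε| := by
      have h2 : 1 ≤ t / ϱ := (one_le_div hϱ0).mpr hϱt
      have h3 : t / ϱ ≤ J := (div_le_iff₀ hϱ0).mpr (by rw [mul_comm]; exact htJ)
      calc t ^ (μ - ε) = (t / ϱ) ^ (μ - ε) * ϱ ^ (μ - ε) := by
            rw [← Real.mul_rpow (div_nonneg ht0.le hϱ0.le) hϱ0.le,
              div_mul_cancel₀ t (ne_of_gt hϱ0)]
        _ ≤ (t / ϱ) ^ |μ - ε| * ϱ ^ (μ - ε) :=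
            mul_le_mul_of_nonneg_right
              (Real.rpow_le_rpow_of_exponent_le h2 (le_abs_self _))
              (Real.rpow_nonneg hϱ0.le _)
        _ ≤ J ^ |μ - ε| * ϱ ^ (μ - ε) :=
            mul_le_mul_of_nonneg_right
              (Real.rpow_le_rpow (by positivity) h3 (abs_nonneg _))
              (Real.rpow_nonneg hϱ0.le _)
        _ = ϱ ^ (μ - ε) * J ^ |μ - ε| := mul_comm _ _
    have hbound : ‖p y η‖ ≤ (ϱ ^ μ)⁻¹ * (Real.exp (Real.log J * ‖a₂ y‖) *
        ((C * (ϱ ^ (μ - ε) * J ^ |μ - ε|)) * Real.exp (Real.log J * ‖a₁ y‖))) := by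
      rw [hid]
      refine (ContinuousLinearMap.opNorm_smul_le _ _).trans ?_
      rw [Complex.norm_real, Real.norm_eq_abs, abs_of_pos (inv_pos.mpr hϱμ)]
      gcongr (ϱ ^ μ)⁻¹ * ?_
      calc ‖((rpowEnd ϱ (a₂ y)).comp (rpowEnd t (-(a₂ y)))).comp
              ((((rpowEnd t (a₂ y)).comp ((p y (ϱ • η)).comp (rpowEnd t (-(a₁ y))))).comp
                ((rpowEnd t (a₁ y)).comp (rpowEnd ϱ (-(a₁ y))))))‖
          ≤ ‖(rpowEnd ϱ (a₂ y)).comp (rpowEnd t (-(a₂ y)))‖ *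
            (‖(rpowEnd t (a₂ y)).comp ((p y (ϱ • η)).comp (rpowEnd t (-(a₁ y))))‖ *
             ‖(rpowEnd t (a₁ y)).comp (rpowEnd ϱ (-(a₁ y)))‖) := by
            refine (ContinuousLinearMap.opNorm_comp_le _ _).trans ?_
            gcongr ?_ * ?_
            · exact ContinuousLinearMap.opNorm_comp_le _ _
        _ ≤ Real.exp (Real.log J * ‖a₂ y‖) *
            ((C * (ϱ ^ (μ - ε) * J ^ |μ - ε|)) * Real.exp (Real.log J * ‖a₁ y‖)) := by
            have hq2 : ‖(rpowEnd t (a₂ y)).comp ((p y (ϱ • η)).comp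
                (rpowEnd t (-(a₁ y))))‖ ≤ C * (ϱ ^ (μ - ε) * J ^ |μ - ε|) :=
              hQ'.trans (mul_le_mul_of_nonneg_left hrt hCpos.le)
            exact mul_le_mul hA
              (mul_le_mul hq2 hB1 (norm_nonneg _) (by positivity))
              (by positivity) (Real.exp_nonneg _)
    refine hbound.trans (le_of_eq ?_)
    have hsplit : (ϱ ^ μ)⁻¹ * ϱ ^ (μ - ε) = ϱ ^ (-ε) := by
      rw [← Real.rpow_neg hϱ0.le, ← Real.rpow_add hϱ0]
      ring_nf
    rw [hBdef, ← hsplit]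
    ring
  have hten : Filter.Tendsto (fun ϱ : ℝ => B * ϱ ^ (-ε)) Filter.atTop (nhds 0) := by
    have h := (tendsto_rpow_neg_atTop hε).const_mul B
    simpa using h
  have hle : ‖p y η‖ ≤ 0 :=
    ge_of_tendsto hten (Filter.eventually_atTop.mpr ⟨1, fun ϱ hϱ => key ϱ hϱ⟩)
  exact norm_le_zero_iff.mp hle
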